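/- Let G ~ G_{n,p,d} be any d-dependent random graph distribution with p > 0, and let k ≥ 2. Then the expected number of k-cliques of G (i.e., k-element vertex subsets all of whose C(k,2) pairs are present edges) is at most C(n,k)·p^{C(k,2)/(d+1)}, where C(k,2) = k(k−1)/2 and the exponent C(k,2)/(d+1) is a real number. -/

import Mathlib

open MeasureTheory ProbabilityTheory Filter

abbrev EdgeIdx (n : ℕ) := {e : Sym2 (Fin n) // ¬ e.IsDiag}

structure DepRandomGraph (n : ℕ) (p : ℝ) (d : ℕ) where
  Ω : Type
  m : MeasurableSpace Ω
  μ : @MeasureTheory.Measure Ω m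
  isProb : @MeasureTheory.IsProbabilityMeasure Ω m μ
  X : EdgeIdx n → Ω → Bool
  meas : ∀ e, @Measurable Ω Bool m ⊤ (X e)
  probX : ∀ e, μ {ω | X e ω = true} = ENNReal.ofReal p
  D : SimpleGraph (EdgeIdx n)
  degBound : ∀ e, (D.neighborSet e).ncard ≤ d
  indep : ∀ e, @ProbabilityTheory.Indep Ω
      (MeasurableSpace.comap (X e) ⊤)
      (⨆ f ∈ {f : EdgeIdx n | f ≠ e ∧ ¬ D.Adj e f}, MeasurableSpace.comap (X f) ⊤)
      m μ

attribute [instance] DepRandomGraph.m DepRandomGraph.isProb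

def DepRandomGraph.graph {n : ℕ} {p : ℝ} {d : ℕ} (G : DepRandomGraph n p d) (ω : G.Ω) :
    SimpleGraph (Fin n) :=
  SimpleGraph.fromEdgeSet {e : Sym2 (Fin n) | ∃ h : ¬ e.IsDiag, G.X ⟨e, h⟩ ω = true}

noncomputable def DepRandomGraph.deg {n : ℕ} {p : ℝ} {d : ℕ} (G : DepRandomGraph n p d)
    (ω : G.Ω) (v : Fin n) : ℕ :=
  {u | (G.graph ω).Adj v u}.ncard

noncomputable def DepRandomGraph.eAB {n : ℕ} {p : ℝ} {d : ℕ} (G : DepRandomGraph n p d)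
    (ω : G.Ω) (A B : Finset (Fin n)) : ℕ :=
  {q : Fin n × Fin n | q.1 ∈ A ∧ q.2 ∈ B ∧ (G.graph ω).Adj q.1 q.2}.ncard

def ContainsCopy {n : ℕ} {α : Type*} (G' : SimpleGraph (Fin n)) (H : SimpleGraph α) : Prop :=
  ∃ f : α → Fin n, Function.Injective f ∧ ∀ u v, H.Adj u v → G'.Adj (f u) (f v)

/-- The number of vertices covered by a finite set of edges. -/
noncomputable def edgeVertCount {α : Type*} (Γ : Finset (Sym2 α)) : ℕ :=
  {v : α | ∃ e ∈ Γ, v ∈ e}.ncard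

/-- The edge cover number of a finite set of edges: the minimum size of a subset `A ⊆ Γ`
such that every edge of `Γ` shares an endpoint with some edge of `A`. -/
noncomputable def coverNum {α : Type*} (Γ : Finset (Sym2 α)) : ℕ :=
  sInf {k : ℕ | ∃ A ⊆ Γ, A.card = k ∧ ∀ e ∈ Γ, ∃ a ∈ A, ∃ v : α, v ∈ e ∧ v ∈ a}

/-!
Fix a `k`-set `s`. Its clique event is the intersection of the `C(k,2)` edge events inside `s`.
Greedily, any finite set `T` of vertices of the dependency graph (maximum degree `≤ d`) contains
an independent set `I` with `|T| ≤ (d+1)|I|`, and the dependency hypothesis makes the edge events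
indexed by an independent set mutually independent. Hence the clique event has probability at
most `p^|I| ≤ p^(C(k,2)/(d+1))`, and linearity of expectation over the `C(n,k)` sets `s`
finishes.
-/

open Finset

namespace SimpleGraph

variable {V : Type*} (D : SimpleGraph V)

theorem exists_isIndepSet_subset_card_le [DecidableEq V] [D.LocallyFinite] {d : ℕ}
    (hd : ∀ v, D.degree v ≤ d) (T : Finset V) :
    ∃ I ⊆ T, D.IsIndepSet I ∧ #T ≤ (d + 1) * #I := by
  induction T using Finset.strongInduction with
  | H T ih =>
  obtain rfl | ⟨v, hv⟩ := T.eq_empty_or_nonempty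
  · exact ⟨∅, by simp⟩
  set N := insert v (D.neighborFinset v)
  have hvN : v ∉ T \ N := fun h => (mem_sdiff.1 h).2 (mem_insert_self _ _)
  obtain ⟨I, hIT, hI, hcard⟩ :=
    ih (T \ N) (sdiff_subset.ssubset_of_not_subset fun h => hvN (h hv))
  have hIN : ∀ w ∈ I, w ∉ N := fun w hw => (mem_sdiff.1 (hIT hw)).2
  have hvI : v ∉ I := fun h => hvN (hIT h)
  refine ⟨insert v I, insert_subset hv (hIT.trans sdiff_subset), ?_, ?_⟩
  · have hnotAdj : ∀ w ∈ I, ¬ D.Adj v w := fun w hw hvw =>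
      hIN w hw (mem_insert_of_mem ((mem_neighborFinset _ _ _).2 hvw))
    rw [coe_insert, isIndepSet_iff, Set.pairwise_insert]
    exact ⟨hI, fun w hw _ => ⟨hnotAdj w hw, fun hwv => hnotAdj w hw hwv.symm⟩⟩
  · calc #T ≤ #(T \ N) + #N := card_le_card_sdiff_add_card
      _ ≤ (d + 1) * #I + (d + 1) :=
          add_le_add hcard ((card_insert_le _ _).trans (by simpa using hd v))
      _ = (d + 1) * #(insert v I) := by rw [card_insert_of_notMem hvI]; ring

end SimpleGraph

theorem MeasureTheory.integral_card_filter_mem_eq_sum {Ω ι : Type*} [MeasurableSpace Ω]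
    {μ : Measure Ω} [IsFiniteMeasure μ] (S : Finset ι) {A : ι → Set Ω}
    (hA : ∀ i ∈ S, MeasurableSet (A i)) [∀ i ω, Decidable (ω ∈ A i)] :
    ∫ ω, (#{i ∈ S | ω ∈ A i} : ℝ) ∂μ = ∑ i ∈ S, μ.real (A i) := by
  have hcount : ∀ ω, (#{i ∈ S | ω ∈ A i} : ℝ) = ∑ i ∈ S, (A i).indicator 1 ω := by
    intro ω
    simp only [card_filter, Nat.cast_sum, Nat.cast_ite, Nat.cast_one, Nat.cast_zero,
      Set.indicator_apply, Pi.one_apply]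
  simp_rw [hcount]
  rw [integral_finsetSum _ fun i hi => (integrable_const 1).indicator (hA i hi)]
  exact sum_congr rfl fun i hi => integral_indicator_one (hA i hi)

def edgesIn {n : ℕ} (s : Finset (Fin n)) : Finset (EdgeIdx n) :=
  (s.offDiag.image Sym2.mk.uncurry).subtype (¬ ·.IsDiag)

theorem mem_edgesIn {n : ℕ} {s : Finset (Fin n)} {e : EdgeIdx n} :
    e ∈ edgesIn s ↔ ∃ u ∈ s, ∃ v ∈ s, u ≠ v ∧ s(u, v) = e.1 := by
  simp [edgesIn, and_assoc]

theorem card_edgesIn {n : ℕ} (s : Finset (Fin n)) : #(edgesIn s) = (#s).choose 2 := by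
  rw [edgesIn, card_subtype, filter_true_of_mem, Sym2.card_image_offDiag]
  simp only [mem_image, mem_offDiag, Prod.exists, Function.uncurry_apply_pair]
  rintro _ ⟨u, v, ⟨-, -, huv⟩, rfl⟩
  exact Sym2.mk_isDiag_iff.not.2 huv

namespace DepRandomGraph

variable {n : ℕ} {p : ℝ} {d : ℕ}

theorem p_le_one (G : DepRandomGraph n p d) (e : EdgeIdx n) : p ≤ 1 := by
  rw [← ENNReal.ofReal_le_one, ← G.probX e]
  exact prob_le_one

variable (G : DepRandomGraph n p d)

theorem measurableSet_edge (e : EdgeIdx n) : MeasurableSet {ω | G.X e ω = true} :=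
  G.meas e (t := {true}) trivial

theorem measure_biInter_edge_of_isIndepSet (I : Finset (EdgeIdx n)) (hI : G.D.IsIndepSet I) :
    G.μ (⋂ e ∈ I, {ω | G.X e ω = true}) = ENNReal.ofReal p ^ #I := by
  classical
  induction I using Finset.induction_on with
  | empty => simp
  | @insert e I he ih =>
    rw [coe_insert, SimpleGraph.isIndepSet_iff, Set.pairwise_insert] at hI
    have hfar : ∀ f ∈ I, f ∈ {f : EdgeIdx n | f ≠ e ∧ ¬ G.D.Adj e f} := fun f hf =>
      ⟨fun h => he (h ▸ hf), (hI.2 f hf (fun h => he (h ▸ hf))).1⟩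
    have hfirst : MeasurableSet[MeasurableSpace.comap (G.X e) ⊤] {ω | G.X e ω = true} :=
      ⟨{true}, trivial, rfl⟩
    have hrest : MeasurableSet[⨆ f ∈ {f : EdgeIdx n | f ≠ e ∧ ¬ G.D.Adj e f},
        MeasurableSpace.comap (G.X f) ⊤] (⋂ f ∈ I, {ω | G.X f ω = true}) :=
      .biInter I.countable_toSet fun f hf =>
        le_biSup (fun f => MeasurableSpace.comap (G.X f) ⊤) (hfar f hf) _
          ⟨{true}, trivial, rfl⟩
    rw [set_biInter_insert, (Indep_iff _ _ _).1 (G.indep e) _ _ hfirst hrest,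
      G.probX e, ih hI.1, card_insert_of_notMem he, pow_succ']

theorem graph_adj_iff {ω : G.Ω} {u v : Fin n} (huv : u ≠ v) :
    (G.graph ω).Adj u v ↔ G.X ⟨s(u, v), Sym2.mk_isDiag_iff.not.2 huv⟩ ω = true := by
  simp [graph, huv]

theorem isClique_iff_forall_edgesIn {ω : G.Ω} {s : Finset (Fin n)} :
    (G.graph ω).IsClique (s : Set (Fin n)) ↔ ∀ e ∈ edgesIn s, G.X e ω = true := by
  constructor
  · intro hs e he
    obtain ⟨u, hu, v, hv, huv, he⟩ := mem_edgesIn.1 he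
    obtain rfl : e = ⟨s(u, v), Sym2.mk_isDiag_iff.not.2 huv⟩ := Subtype.ext he.symm
    exact (G.graph_adj_iff huv).1 (hs hu hv huv)
  · intro hX u hu v hv huv
    exact (G.graph_adj_iff huv).2 (hX _ (mem_edgesIn.2 ⟨u, hu, v, hv, huv, rfl⟩))

def cliqueEvent (s : Finset (Fin n)) : Set G.Ω :=
  {ω | (G.graph ω).IsClique (s : Set (Fin n))}

theorem cliqueEvent_eq_biInter (s : Finset (Fin n)) :
    G.cliqueEvent s = ⋂ e ∈ edgesIn s, {ω | G.X e ω = true} := by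
  ext ω
  simp only [cliqueEvent, Set.mem_ofPred_eq, Set.mem_iInter, G.isClique_iff_forall_edgesIn]

theorem measurableSet_cliqueEvent (s : Finset (Fin n)) : MeasurableSet (G.cliqueEvent s) := by
  rw [cliqueEvent_eq_biInter]
  exact .biInter (edgesIn s).countable_toSet fun e _ => G.measurableSet_edge e

theorem measureReal_cliqueEvent_le (hp : 0 < p) (s : Finset (Fin n)) :
    G.μ.real (G.cliqueEvent s) ≤ p ^ (((#s).choose 2 : ℝ) / (d + 1)) := by
  classical
  have hdeg : ∀ e, G.D.degree e ≤ d := fun e => by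
    rw [← SimpleGraph.card_neighborSet_eq_degree, ← Nat.card_eq_fintype_card,
      Nat.card_coe_set_eq]
    exact G.degBound e
  obtain ⟨I, hIs, hI, hcard⟩ := G.D.exists_isIndepSet_subset_card_le hdeg (edgesIn s)
  have hclique : G.μ.real (G.cliqueEvent s) ≤ p ^ #I := by
    calc _ ≤ G.μ.real (⋂ e ∈ I, {ω | G.X e ω = true}) := by
          rw [cliqueEvent_eq_biInter]
          exact measureReal_mono (Set.biInter_subset_biInter_left hIs)
      _ = p ^ #I := by
          rw [measureReal_def, G.measure_biInter_edge_of_isIndepSet I hI, ENNReal.toReal_pow,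
            ENNReal.toReal_ofReal hp.le]
  have hexp : ((#s).choose 2 : ℝ) / (d + 1) ≤ #I := by
    rw [div_le_iff₀ (by positivity), ← card_edgesIn]
    exact_mod_cast hcard.trans_eq (mul_comm _ _)
  refine hclique.trans ?_
  obtain rfl | ⟨e, -⟩ := I.eq_empty_or_nonempty
  · have : ((#s).choose 2 : ℝ) / (d + 1) = 0 :=
      le_antisymm (by simpa using hexp) (by positivity)
    simp [this]
  · rw [← Real.rpow_natCast]
    exact Real.rpow_le_rpow_of_exponent_ge hp (G.p_le_one e) hexp

end DepRandomGraph

theorem expected_clique_count_general {n : ℕ} {p : ℝ} {d : ℕ} (G : DepRandomGraph n p d) (hp : 0 < p)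
    (k : ℕ) :
    (∫ ω, ({s : Finset (Fin n) | s.card = k ∧
        (G.graph ω).IsClique (↑s : Set (Fin n))}.ncard : ℝ) ∂G.μ) ≤
      (n.choose k : ℝ) * p ^ ((k.choose 2 : ℝ) / ((d : ℝ) + 1)) := by
  classical
  have hcount : ∀ ω,
      {s : Finset (Fin n) | s.card = k ∧ (G.graph ω).IsClique (s : Set (Fin n))}.ncard =
        #{s ∈ powersetCard k univ | ω ∈ G.cliqueEvent s} := by
    intro ω
    rw [← Set.ncard_coe_finset]
    congr 1
    ext s
    rw [mem_coe, mem_filter, mem_powersetCard]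
    simp [DepRandomGraph.cliqueEvent]
  simp_rw [hcount]
  rw [integral_card_filter_mem_eq_sum _ fun s _ => G.measurableSet_cliqueEvent s]
  calc _ ≤ ∑ _s ∈ powersetCard k univ, p ^ ((k.choose 2 : ℝ) / (d + 1)) :=
        sum_le_sum fun s hs => (mem_powersetCard.1 hs).2 ▸ G.measureReal_cliqueEvent_le hp s
    _ = _ := by simp [card_powersetCard]

/-- **Expected number of cliques.** For any `d`-dependent random graph distribution with
`p > 0` and any `k ≥ 2`, the expected number of `k`-cliques is at most
`C(n,k) · p^(C(k,2)/(d+1))` (real exponent). -/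
theorem expected_clique_count {n : ℕ} {p : ℝ} {d : ℕ} (G : DepRandomGraph n p d) (hp : 0 < p)
    (k : ℕ) (hk : 2 ≤ k) :
    (∫ ω, ({s : Finset (Fin n) | s.card = k ∧
        (G.graph ω).IsClique (↑s : Set (Fin n))}.ncard : ℝ) ∂G.μ) ≤
      (n.choose k : ℝ) * p ^ ((k.choose 2 : ℝ) / ((d : ℝ) + 1)) :=
  expected_clique_count_general G hp k
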